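/- arXiv:2307.00884 — 5 statements merged into one kernel-verified Lean document; each statement's English description precedes it below -/
import Mathlib

section
/- If v : G → B is a partial *-representation of a group G in a unital C*-algebra B, and for each t ∈ G one sets e(t) := v(t)v(t)*, then the projections e(s) and e(t) commute for all s, t ∈ G, and v(s)e(t) = e(st)v(s) for all s, t ∈ G. -/
/-! The range projection of `v t` is `e t = v t * v t⁻¹`. Both `v s * e t` and `e (s * t) * v s`
reduce to `v (s * t) * v t⁻¹`, one by the defining relation and one by its adjoint. Applied to
`s⁻¹`, this gives `e s * e t = v s * e (s⁻¹ * t) * star (v s)`, a self-adjoint element, and a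
product of two self-adjoint elements is self-adjoint exactly when they commute. -/

section PartialStarRep

variable {G B : Type*} [Group G] [Monoid B] [StarMul B] {v : G → B}
  (hstar : ∀ t : G, v t⁻¹ = star (v t))
  (hrel : ∀ s t : G, v s⁻¹ * v s * v t = v s⁻¹ * v (s * t))
include hstar hrel

theorem partialRep_mul_mul_inv (s t : G) : v s * v t * v t⁻¹ = v (s * t) * v t⁻¹ := by
  have h := congrArg star (hrel t⁻¹ s⁻¹)
  simp only [inv_inv, ← mul_inv_rev, star_mul, ← hstar, mul_assoc] at h
  simpa only [mul_assoc] using h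

theorem partialRep_mul_rangeProj (s t : G) :
    v s * (v t * star (v t)) = v (s * t) * star (v (s * t)) * v s := by
  have hcancel : (s * t)⁻¹ * s = t⁻¹ := by group
  calc v s * (v t * star (v t)) = v (s * t) * v t⁻¹ := by
        rw [← hstar, ← mul_assoc, partialRep_mul_mul_inv hstar hrel]
    _ = v (s * t) * star (v (s * t)) * v s := by
        have h := hrel (s * t)⁻¹ s
        rw [inv_inv, hcancel] at h
        rw [← hstar, h]

theorem partialRep_rangeProj_commute (s t : G) :
    Commute (v s * star (v s)) (v t * star (v t)) := by
  have hconj : v s * star (v s) * (v t * star (v t))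
      = v s * (v (s⁻¹ * t) * star (v (s⁻¹ * t))) * star (v s) := by
    rw [← hstar s, mul_assoc, partialRep_mul_rangeProj hstar hrel, ← mul_assoc]
  rw [IsSelfAdjoint.commute_iff (.mul_star_self _) (.mul_star_self _), hconj]
  exact (IsSelfAdjoint.mul_star_self _).conjugate _

end PartialStarRep

theorem partialRep_range_projections_general {G B : Type*} [Group G] [CStarAlgebra B]
    (v : G → B) (hstar : ∀ t : G, v t⁻¹ = star (v t))
    (hrel : ∀ s t : G, v s⁻¹ * v s * v t = v s⁻¹ * v (s * t))
    (e : G → B) (he : ∀ t : G, e t = v t * star (v t)) :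
    (∀ s t : G, e s * e t = e t * e s) ∧ (∀ s t : G, v s * e t = e (s * t) * v s) := by
  obtain rfl : e = fun t => v t * star (v t) := funext he
  exact ⟨fun s t => (partialRep_rangeProj_commute hstar hrel s t).eq,
    partialRep_mul_rangeProj hstar hrel⟩

/-- If `v : G → B` is a partial *-representation of a group `G` in a unital C*-algebra `B`
and `e t := v t * (v t)*` denotes the range projection of `v t`, then the projections
`e s` and `e t` commute, and `v s * e t = e (s*t) * v s` for all `s, t ∈ G`. -/
theorem partialRep_range_projections {G B : Type*} [Group G] [CStarAlgebra B]
    (v : G → B) (hone : v 1 = 1) (hstar : ∀ t : G, v t⁻¹ = star (v t))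
    (hrel : ∀ s t : G, v s⁻¹ * v s * v t = v s⁻¹ * v (s * t))
    (e : G → B) (he : ∀ t : G, e t = v t * star (v t)) :
    (∀ s t : G, e s * e t = e t * e s) ∧ (∀ s t : G, v s * e t = e (s * t) * v s) :=
  partialRep_range_projections_general v hstar hrel e he
end

section
/- Let η be a partial action of a group G on a finite set Z with domains V_t ⊆ Z. In the matrix algebra M_d where d = |Z|, with standard matrix units e_{x,y} indexed by elements of Z, define v_t := Σ_{z ∈ V_{t⁻¹}} e_{η_t(z), z}. Then v : G → M_d is a partial *-representation: v_e = 1, v_t* = v_{t⁻¹}, and v_{s⁻¹} v_s v_t = v_{s⁻¹} v_{st} for all s, t ∈ G. -/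
/-- A partial action of a group `G` on a set `X`, given by domains `U t ⊆ X` and maps
`θ t` (recorded as total maps, only their values on `U t⁻¹` matter): `U 1 = X`,
`θ 1 = id`, `θ t` maps `U t⁻¹` into `U t`, and `θ (s*t)` extends `θ s ∘ θ t`. -/
def IsPartialAction {G X : Type*} [Group G] (U : G → Set X) (θ : G → X → X) : Prop :=
  U 1 = Set.univ ∧ (∀ x : X, θ 1 x = x) ∧ (∀ (t : G) (x : X), x ∈ U t⁻¹ → θ t x ∈ U t) ∧
    ∀ (s t : G) (x : X), x ∈ U t⁻¹ → θ t x ∈ U s⁻¹ →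
      x ∈ U (s * t)⁻¹ ∧ θ s (θ t x) = θ (s * t) x

/-- For a partial action `η` of `G` on a finite set `Z` with domains `V t`, the matrices
`v t := Σ_{z ∈ V t⁻¹} e_{η t z, z}` form a partial *-representation of `G` in `M_{|Z|}`:
`v 1 = 1`, `(v t)* = v t⁻¹`, and `v s⁻¹ * v s * v t = v s⁻¹ * v (s*t)`. -/
theorem finite_partialAction_partialRep {G Z : Type*} [Group G] [Fintype Z] [DecidableEq Z]
    (V : G → Set Z) (η : G → Z → Z) [∀ t : G, DecidablePred (· ∈ V t)]
    (hpa : IsPartialAction V η) (v : G → Matrix Z Z ℂ)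
    (hv : ∀ t : G, v t =
      ∑ z : Z, if z ∈ V t⁻¹ then Matrix.single (η t z) z (1 : ℂ) else 0) :
    v 1 = 1 ∧ (∀ t : G, star (v t) = v t⁻¹) ∧
      ∀ s t : G, v s⁻¹ * v s * v t = v s⁻¹ * v (s * t) := by
  obtain ⟨hU1, hθ1, hmem, hcomp⟩ := hpa
  have hmem' : ∀ (t : G) (x : Z), x ∈ V t⁻¹ → η t x ∈ V t⁻¹⁻¹ := by
    intro t x hx; rw [inv_inv]; exact hmem t x hx
  have hcancel : ∀ (t : G) (x : Z), x ∈ V t⁻¹ → η t⁻¹ (η t x) = x := by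
    intro t x hx
    have h := (hcomp t⁻¹ t x hx (hmem' t x hx)).2
    rw [inv_mul_cancel] at h
    rw [h, hθ1]
  -- entrywise formula for v t
  have entry : ∀ (t : G) (i j : Z),
      v t i j = if j ∈ V t⁻¹ ∧ i = η t j then 1 else 0 := by
    intro t i j
    rw [hv t, Matrix.sum_apply]
    rw [Finset.sum_eq_single j]
    · by_cases hj : j ∈ V t⁻¹
      · simp [hj, Matrix.single, eq_comm]
      · simp [hj]
    · intro k _ hk
      by_cases hk' : k ∈ V t⁻¹ <;> simp [hk', Matrix.single, hk]
    · simp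
  -- entrywise formula for products
  have mulentry : ∀ (a b : G) (i j : Z), (v a * v b) i j =
      if j ∈ V b⁻¹ ∧ η b j ∈ V a⁻¹ ∧ i = η a (η b j) then 1 else 0 := by
    intro a b i j
    rw [Matrix.mul_apply]
    rw [Finset.sum_eq_single (η b j)]
    · rw [entry, entry]
      by_cases h1 : j ∈ V b⁻¹ <;> by_cases h2 : η b j ∈ V a⁻¹ <;>
        by_cases h3 : i = η a (η b j) <;> simp [h1, h2, h3]
    · intro k _ hk
      rw [entry b k j, if_neg (fun h => hk h.2), mul_zero]
    · simp
  refine ⟨?_, ?_, ?_⟩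
  · ext i j
    rw [entry, Matrix.one_apply]
    have h1 : j ∈ V (1 : G)⁻¹ := by rw [inv_one, hU1]; trivial
    simp [h1, hθ1 j, eq_comm, hU1]
  · intro t
    ext i j
    rw [Matrix.star_apply, entry, entry]
    have hiff : (i ∈ V t⁻¹ ∧ j = η t i) ↔ (j ∈ V t⁻¹⁻¹ ∧ i = η t⁻¹ j) := by
      constructor
      · rintro ⟨hi, rfl⟩
        exact ⟨hmem' t i hi, (hcancel t i hi).symm⟩
      · rintro ⟨hj, rfl⟩
        refine ⟨hmem t⁻¹ j hj, ?_⟩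
        have := hcancel t⁻¹ j hj
        rw [inv_inv] at this
        exact this.symm
    by_cases h : i ∈ V t⁻¹ ∧ j = η t i
    · rw [if_pos h, if_pos (hiff.mp h)]; simp
    · rw [if_neg h, if_neg (fun h' => h (hiff.mpr h'))]; simp
  · intro s t
    -- v s⁻¹ * v s is the diagonal projection onto V s⁻¹
    have Pentry : ∀ (i k : Z), (v s⁻¹ * v s) i k = if k ∈ V s⁻¹ ∧ i = k then 1 else 0 := by
      intro i k
      rw [mulentry]
      by_cases hk : k ∈ V s⁻¹
      · have h2 : η s k ∈ V s := hmem s k hk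
        have h3 : η s⁻¹ (η s k) = k := hcancel s k hk
        simp [hk, h2, h3]
      · simp [hk]
    have tri : ∀ (i j : Z), (v s⁻¹ * v s * v t) i j =
        if i ∈ V s⁻¹ ∧ j ∈ V t⁻¹ ∧ i = η t j then 1 else 0 := by
      intro i j
      rw [Matrix.mul_apply]
      rw [Finset.sum_eq_single i]
      · rw [Pentry, entry]
        by_cases hi : i ∈ V s⁻¹ <;> by_cases hc : j ∈ V t⁻¹ ∧ i = η t j <;>
          simp [hi, hc]
      · intro k _ hk
        rw [Pentry, if_neg (fun h => hk h.2.symm), zero_mul]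
      · simp
    have key : ∀ (i j : Z), (i ∈ V s⁻¹ ∧ j ∈ V t⁻¹ ∧ i = η t j) ↔
        (j ∈ V (s * t)⁻¹ ∧ η (s * t) j ∈ V s⁻¹⁻¹ ∧ i = η s⁻¹ (η (s * t) j)) := by
      intro i j
      constructor
      · rintro ⟨hi, hj, rfl⟩
        have h := hcomp s t j hj hi
        refine ⟨h.1, ?_, ?_⟩
        · rw [← h.2]; exact hmem' s (η t j) hi
        · rw [← h.2, hcancel s (η t j) hi]
      · rintro ⟨hj, hst, rfl⟩
        rw [inv_inv] at hst
        have h := hcomp s⁻¹ (s * t) j hj (by rwa [inv_inv])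
        have e : s⁻¹ * (s * t) = t := by group
        rw [e] at h
        exact ⟨hmem s⁻¹ (η (s * t) j) (by rwa [inv_inv]), h.1, h.2⟩
    ext i j
    rw [tri, mulentry]
    exact if_congr (key i j) rfl rfl
end

section
/- Let A be a unital C*-algebra, 0 < η < 1/8, and v ∈ A a contraction with ‖v v* v − v‖ < 2η. Then there exists a partial isometry u ∈ A (i.e. u*u is a projection) with ‖u − v‖ < 10η. -/
noncomputable def fff : ℝ → ℝ := fun t => (min 1 (max 0 (4*t - 1))) / Real.sqrt (max t (1/2))

lemma fff_cont : Continuous fff := by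
  apply Continuous.div
  · fun_prop
  · fun_prop
  · intro t
    have : (0:ℝ) < max t (1/2) := lt_of_lt_of_le one_half_pos (le_max_right _ _)
    positivity

lemma fff_zero {t : ℝ} (ht : t < 1/4) : fff t = 0 := by
  unfold fff
  rw [max_eq_left (by linarith), min_eq_right (by norm_num), zero_div]

lemma fff_big {t : ℝ} (ht : 1/2 ≤ t) : fff t = 1 / Real.sqrt t := by
  unfold fff
  rw [max_eq_right (by linarith), min_eq_left (by linarith), max_eq_left ht]

lemma fff_big_mul {t : ℝ} (ht : 1/2 ≤ t) : fff t * t * fff t = 1 := by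
  rw [fff_big ht]
  have hs : Real.sqrt t * Real.sqrt t = t := Real.mul_self_sqrt (by linarith)
  have hs0 : Real.sqrt t ≠ 0 := by
    intro h0; rw [h0] at hs; linarith [hs]
  field_simp
  linear_combination (-1 : ℝ) * hs

lemma fff_big_dist {t : ℝ} (ht : 1/2 ≤ t) (ht1 : t ≤ 1) :
    t * (fff t - 1)^2 = (1 - Real.sqrt t)^2 := by
  rw [fff_big ht]
  have hs : Real.sqrt t * Real.sqrt t = t := Real.mul_self_sqrt (by linarith)
  have hs0 : Real.sqrt t ≠ 0 := by
    intro h0; rw [h0] at hs; linarith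
  field_simp
  linear_combination (-(1 - Real.sqrt t)^2) * hs




/-- If `v` is a contraction in a unital C*-algebra with `‖v v* v − v‖ < 2η` for some
`0 < η < 1/8`, then there is a partial isometry `u` (i.e. `u* u` is a projection) with
`‖u − v‖ < 10η`. -/
theorem almost_partialIsometry_near_partialIsometry {A : Type*} [CStarAlgebra A]
    (v : A) (hv : ‖v‖ ≤ 1) (η : ℝ) (hη₀ : 0 < η) (hη : η < 1 / 8)
    (h : ‖v * star v * v - v‖ < 2 * η) :
    ∃ u : A, IsIdempotentElem (star u * u) ∧ ‖u - v‖ < 10 * η := by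
  set x := star v * v with hxdef
  have hxsa : IsSelfAdjoint x := IsSelfAdjoint.star_mul_self v
  have hxnorm : ‖x‖ ≤ 1 := by
    rw [hxdef, CStarRing.norm_star_mul_self]
    nlinarith [norm_nonneg v]
  -- spectrum is in [0,1]
  have hsub : ∀ t ∈ spectrum ℝ x, 0 ≤ t ∧ t ≤ 1 := by
    intro t ht
    have ht' := ht
    rw [hxdef] at ht'
    refine ⟨spectrum_star_mul_self_nonneg t ht', ?_⟩
    have := norm_apply_le_norm_cfc (id : ℝ → ℝ) x ht
    rw [cfc_id ℝ x] at this
    calc t ≤ |t| := le_abs_self t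
    _ ≤ ‖x‖ := this
    _ ≤ 1 := hxnorm
  -- the key spectral inequality
  have hw : v * x - v = v * star v * v - v := by rw [hxdef, mul_assoc]
  have hP : cfc (fun t : ℝ => (t-1)*t*(t-1)) x = star (v * x - v) * (v * x - v) := by
    have h1 : cfc (fun t : ℝ => (t-1)*t*(t-1)) x = (x-1)*x*(x-1) := by
      rw [cfc_mul _ _ x (by fun_prop) (by fun_prop), cfc_mul _ _ x (by fun_prop) (by fun_prop),
        cfc_sub (fun t : ℝ => t) (fun _ => 1) x (by fun_prop) (by fun_prop), cfc_id' ℝ x,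
        cfc_const_one ℝ x]
    rw [h1, hxdef]
    simp only [star_sub, star_mul, star_star, IsSelfAdjoint.star_eq (IsSelfAdjoint.star_mul_self v)]
    noncomm_ring
  have hPnorm : ‖cfc (fun t : ℝ => (t-1)*t*(t-1)) x‖ < 4 * η^2 := by
    rw [hP, hw, CStarRing.norm_star_mul_self]
    nlinarith [norm_nonneg (v * star v * v - v)]
  have hkey : ∀ t ∈ spectrum ℝ x, (t-1)*t*(t-1) < 4 * η^2 := by
    intro t ht
    have := norm_apply_le_norm_cfc (fun t : ℝ => (t-1)*t*(t-1)) x ht (by fun_prop)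
    calc (t-1)*t*(t-1) ≤ |(t-1)*t*(t-1)| := le_abs_self _
    _ ≤ ‖cfc (fun t : ℝ => (t-1)*t*(t-1)) x‖ := this
    _ < 4 * η^2 := hPnorm
  -- dichotomy
  have hdich : ∀ t ∈ spectrum ℝ x, (t < 1/4 ∧ t ≤ 16*η^2) ∨ (1/2 ≤ t) := by
    intro t ht
    obtain ⟨ht0, ht1⟩ := hsub t ht
    have hk := hkey t ht
    by_cases hc : 1/2 ≤ t
    · exact Or.inr hc
    · push_neg at hc
      left
      have h14 : (1-t)*(1-t) ≥ 1/4 := by nlinarith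
      have ht16 : t ≤ 16*η^2 := by
        nlinarith [mul_le_mul_of_nonneg_left h14 ht0]
      exact ⟨by nlinarith [mul_lt_mul_of_pos_left hη hη₀], ht16⟩
  -- define u
  set u := v * cfc fff x with hudef
  have hcf : ContinuousOn fff (spectrum ℝ x) := fff_cont.continuousOn
  have hcsa : IsSelfAdjoint (cfc fff x) := cfc_predicate fff x
  have huu : star u * u = cfc (fun t => fff t * t * fff t) x := by
    rw [hudef, star_mul, hcsa.star_eq, mul_assoc, ← mul_assoc (star v) v _, ← hxdef,
      cfc_mul _ _ x (by fun_prop) hcf, cfc_mul _ _ x hcf (by fun_prop), cfc_id' ℝ x,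
      ← mul_assoc]
  refine ⟨u, ?_, ?_⟩
  · rw [huu]
    unfold IsIdempotentElem
    rw [← cfc_mul _ _ x (by fun_prop) (by fun_prop)]
    apply cfc_congr
    intro t ht
    rcases hdich t ht with ⟨ht4, -⟩ | ht2
    · simp [fff_zero ht4]
    · simp [fff_big_mul ht2]
  · -- norm estimate
    have hsplit : u - v = v * cfc (fun t => fff t - 1) x := by
      rw [cfc_sub fff (fun _ => 1) x hcf (by fun_prop), cfc_const_one ℝ x, hudef,
        mul_sub, mul_one]
    have hcsa2 : IsSelfAdjoint (cfc (fun t => fff t - 1) x) := cfc_predicate _ x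
    have hprod : star (u - v) * (u - v) = cfc (fun t => (fff t - 1) * t * (fff t - 1)) x := by
      rw [hsplit, star_mul, hcsa2.star_eq, mul_assoc, ← mul_assoc (star v) v _, ← hxdef,
        cfc_mul _ _ x (by fun_prop) (by fun_prop), cfc_mul _ _ x (by fun_prop) (by fun_prop),
        cfc_id' ℝ x, ← mul_assoc]
    have hb : ‖star (u - v) * (u - v)‖ ≤ 16 * η^2 := by
      rw [hprod]
      apply norm_cfc_le (by positivity)
      intro t ht
      obtain ⟨ht0, ht1⟩ := hsub t ht
      rcases hdich t ht with ⟨ht4, ht16⟩ | ht2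
      · rw [fff_zero ht4]
        rw [Real.norm_eq_abs]
        rw [abs_of_nonneg (by nlinarith)]
        nlinarith
      · have h1 : (fff t - 1) * t * (fff t - 1) = t * (fff t - 1)^2 := by ring
        rw [h1, fff_big_dist ht2 ht1, Real.norm_eq_abs, abs_of_nonneg (sq_nonneg _)]
        have hs : Real.sqrt t * Real.sqrt t = t := Real.mul_self_sqrt ht0
        have hsle : t ≤ Real.sqrt t := by
          nlinarith [Real.sqrt_nonneg t]
        have h8 : (1-t)^2 < 8 * η^2 := by nlinarith [hkey t ht]
        nlinarith [Real.sqrt_nonneg t]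
    have hnn : ‖u - v‖ * ‖u - v‖ ≤ 16 * η^2 := by
      rw [← CStarRing.norm_star_mul_self]; exact hb
    nlinarith [norm_nonneg (u - v)]
end

section
/- Let G be a countable residually finite group. Then the partial Bernoulli action θ of G on X_G = {x ∈ {0,1}^G : x(e) = 1} (with the metric d(x,y) = Σ_k 2^{−k}|x(t_k) − y(t_k)| for a fixed enumeration G = {t_0 = e, t_1, t_2, ...}) is residually finite-dimensional: for every δ > 0 there exist a finite set Z, a partial action η of G on Z, and a strictly equivariant map ρ : Z → X_G whose range is δ-dense in X_G. -/
theorem IsPartialAction.comp_monoidHom {G Γ X : Type*} [Group G] [Group Γ] {U : Γ → Set X}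
    {θ : Γ → X → X} (h : IsPartialAction U θ) (ψ : G →* Γ) :
    IsPartialAction (fun s => U (ψ s)) (fun s => θ (ψ s)) := by
  obtain ⟨h_one, h_id, h_maps, h_mul⟩ := h
  refine ⟨by simpa using h_one, by simpa using h_id, fun s x hx => ?_, fun s r x hx hrx => ?_⟩
  · exact h_maps (ψ s) x (by simpa using hx)
  · simpa using h_mul (ψ s) (ψ r) x (by simpa using hx) (by simpa using hrx)

namespace PartialBernoulli

variable {Γ : Type*} [Group Γ]

abbrev Space (Γ : Type*) [One Γ] : Type _ := {z : Γ → Bool // z 1 = true}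

def domain (g : Γ) : Set (Space Γ) := {z | z.1 g = true}

/-- Off `domain g⁻¹` the value is irrelevant; we take `z`. -/
def map (g : Γ) (z : Space Γ) : Space Γ :=
  if h : z.1 g⁻¹ = true then ⟨fun γ => z.1 (g⁻¹ * γ), by simpa using h⟩ else z

theorem map_apply {g : Γ} {z : Space Γ} (hz : z ∈ domain g⁻¹) (γ : Γ) :
    (map g z).1 γ = z.1 (g⁻¹ * γ) := by
  rw [map, dif_pos (show z.1 g⁻¹ = true from hz)]

theorem isPartialAction : IsPartialAction (domain (Γ := Γ)) map := by
  refine ⟨Set.eq_univ_of_forall fun z => z.2, fun z => ?_, fun g z hz => ?_,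
    fun g h z hz hhz => ?_⟩
  · exact Subtype.ext <| funext fun γ => by
      simpa using map_apply (g := 1) (z := z) (by simpa [domain] using z.2) γ
  · simpa [domain, map_apply hz] using z.2
  · have hghz : z ∈ domain (g * h)⁻¹ := by
      simpa [domain, map_apply hz, mul_inv_rev] using hhz
    refine ⟨hghz, Subtype.ext <| funext fun γ => ?_⟩
    rw [map_apply hhz, map_apply hz, map_apply hghz, mul_inv_rev, mul_assoc]

end PartialBernoulli

theorem tsum_half_pow_mul_le_of_eq_zero {a : ℕ → ℝ} {N : ℕ} (h0 : ∀ k, 0 ≤ a k)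
    (h1 : ∀ k, a k ≤ 1) (hN : ∀ k < N, a k = 0) :
    ∑' k, (1 / 2 : ℝ) ^ k * a k ≤ (1 / 2) ^ N * 2 := by
  have hle : ∀ k, (1 / 2 : ℝ) ^ k * a k ≤ (1 / 2) ^ k := fun k =>
    mul_le_of_le_one_right (by positivity) (h1 k)
  have hgeom : Summable fun k : ℕ => (1 / 2 : ℝ) ^ k :=
    summable_geometric_of_lt_one (by norm_num) (by norm_num)
  have hsum : Summable fun k => (1 / 2 : ℝ) ^ k * a k :=
    hgeom.of_nonneg_of_le (fun k => mul_nonneg (by positivity) (h0 k)) hle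
  have hhead : ∑ k ∈ Finset.range N, (1 / 2 : ℝ) ^ k * a k = 0 :=
    Finset.sum_eq_zero fun k hk => by rw [hN k (Finset.mem_range.mp hk), mul_zero]
  calc ∑' k, (1 / 2 : ℝ) ^ k * a k = ∑' k, (1 / 2 : ℝ) ^ (k + N) * a (k + N) := by
        rw [← hsum.sum_add_tsum_nat_add N, hhead, zero_add]
    _ ≤ ∑' k, (1 / 2 : ℝ) ^ N * (1 / 2) ^ k :=
        Summable.tsum_le_tsum
          (fun k => by rw [mul_comm _ ((1 / 2 : ℝ) ^ k), ← pow_add]; exact hle _)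
          ((summable_nat_add_iff N).mpr hsum) (hgeom.mul_left _)
    _ = (1 / 2) ^ N * 2 := by rw [tsum_mul_left, tsum_geometric_two]

theorem tsum_half_pow_mul_abs_ite_sub_le {G : Type*} {x y : G → Bool} {t : ℕ → G} {N : ℕ}
    (h : ∀ k < N, x (t k) = y (t k)) :
    ∑' k, (1 / 2 : ℝ) ^ k *
      |(if x (t k) then (1 : ℝ) else 0) - (if y (t k) then (1 : ℝ) else 0)| ≤ (1 / 2) ^ N * 2 :=
  tsum_half_pow_mul_le_of_eq_zero (fun _ => abs_nonneg _)
    (fun k => by cases x (t k) <;> cases y (t k) <;> norm_num)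
    (fun k hk => by rw [h k hk, sub_self, abs_zero])

theorem partial_bernoulli_RFD_general {G : Type*} [Group G]
    (hRF : ∀ F : Finset G, ∃ (Γ : Type) (_ : Fintype Γ) (_ : Group Γ) (ψ : G →* Γ),
      Set.InjOn ψ (insert 1 (F : Set G)))
    (t : ℕ → G)
    (d : (G → Bool) → (G → Bool) → ℝ)
    (hd : ∀ x y : G → Bool, d x y = ∑' k : ℕ,
      (1 / 2 : ℝ) ^ k * |(if x (t k) then (1 : ℝ) else 0) - (if y (t k) then (1 : ℝ) else 0)|)
    (θ : G → (G → Bool) → (G → Bool))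
    (hθ : ∀ (s : G) (x : G → Bool) (r : G), θ s x r = x (s⁻¹ * r))
    (U : G → Set (G → Bool))
    (hU : ∀ s : G, U s = {x : G → Bool | x 1 = true ∧ x s = true})
    (δ : ℝ) (hδ : 0 < δ) :
    ∃ (Z : Type) (_ : Fintype Z) (V : G → Set Z) (η : G → Z → Z),
      IsPartialAction V η ∧
      ∃ ρ : Z → (G → Bool),
        (∀ z : Z, ρ z 1 = true) ∧
        (∀ s : G, ρ '' V s ⊆ U s) ∧
        (∀ (s : G) (z : Z), ρ z ∈ U s → z ∈ V s) ∧
        (∀ (s : G) (z : Z), z ∈ V s⁻¹ → ρ (η s z) = θ s (ρ z)) ∧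
        ∀ x : G → Bool, x 1 = true → ∃ z : Z, d (ρ z) x < δ := by
  classical
  obtain ⟨N, hN⟩ : ∃ N : ℕ, (1 / 2 : ℝ) ^ N * 2 < δ := by
    obtain ⟨N, hN⟩ := exists_pow_lt_of_lt_one (half_pos hδ) (by norm_num : (1 / 2 : ℝ) < 1)
    exact ⟨N, by linarith⟩
  set S : Set G := insert 1 ((Finset.range N).image t : Set G)
  obtain ⟨Γ, _, _, ψ, hψ⟩ := hRF ((Finset.range N).image t)
  refine ⟨PartialBernoulli.Space Γ, Fintype.ofFinite _, fun s => PartialBernoulli.domain (ψ s),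
    fun s => PartialBernoulli.map (ψ s), PartialBernoulli.isPartialAction.comp_monoidHom ψ,
    fun z g => z.1 (ψ g), fun z => by simpa using z.2, ?_, fun s z hz => ?_, ?_, ?_⟩
  · rintro s _ ⟨z, hz, rfl⟩
    rw [hU]
    exact ⟨by simpa using z.2, hz⟩
  · rw [hU] at hz
    exact hz.2
  · intro s z hz
    funext r
    dsimp only
    rw [hθ, PartialBernoulli.map_apply (by simpa using hz), map_mul, map_inv]
  · intro x hx
    set z : Γ → Bool := x ∘ Function.invFunOn ψ S
    have hz : ∀ g ∈ S, z (ψ g) = x g := fun g hg => congrArg x (hψ.leftInvOn_invFunOn hg)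
    refine ⟨⟨z, by simpa [hx] using hz 1 (Set.mem_insert 1 _)⟩, ?_⟩
    rw [hd]
    refine (tsum_half_pow_mul_abs_ite_sub_le (x := fun g => z (ψ g)) fun k hk =>
      hz (t k) ?_).trans_lt hN
    exact Set.mem_insert_of_mem _ (by simpa using ⟨k, hk, rfl⟩)

/-- If `G` is a countable residually finite group, then the partial Bernoulli action of
`G` on `X_G = {x ∈ {0,1}^G : x 1 = 1}` (with domains `U t = {x : x 1 = x t = 1}`, maps
`θ t x = x ∘ σ t⁻¹`, and the metric `d(x,y) = Σ_k 2⁻ᵏ |x (t_k) − y (t_k)|` for a fixed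
enumeration `t : ℕ → G` with `t 0 = 1`) is residually finite-dimensional: for every
`δ > 0` there are a finite set `Z`, a partial action `η` of `G` on `Z` with domains
`V t`, and a strictly equivariant map `ρ : Z → X_G` with `δ`-dense range. -/
theorem partial_bernoulli_RFD {G : Type*} [Group G] [Countable G]
    (hRF : ∀ F : Finset G, ∃ (Γ : Type) (_ : Fintype Γ) (_ : Group Γ) (ψ : G →* Γ),
      Set.InjOn ψ (insert 1 (F : Set G)))
    (t : ℕ → G) (ht0 : t 0 = 1) (htsurj : Function.Surjective t)
    (d : (G → Bool) → (G → Bool) → ℝ)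
    (hd : ∀ x y : G → Bool, d x y = ∑' k : ℕ,
      (1 / 2 : ℝ) ^ k * |(if x (t k) then (1 : ℝ) else 0) - (if y (t k) then (1 : ℝ) else 0)|)
    (θ : G → (G → Bool) → (G → Bool))
    (hθ : ∀ (s : G) (x : G → Bool) (r : G), θ s x r = x (s⁻¹ * r))
    (U : G → Set (G → Bool))
    (hU : ∀ s : G, U s = {x : G → Bool | x 1 = true ∧ x s = true})
    (δ : ℝ) (hδ : 0 < δ) :
    ∃ (Z : Type) (_ : Fintype Z) (V : G → Set Z) (η : G → Z → Z),
      IsPartialAction V η ∧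
      ∃ ρ : Z → (G → Bool),
        (∀ z : Z, ρ z 1 = true) ∧
        (∀ s : G, ρ '' V s ⊆ U s) ∧
        (∀ (s : G) (z : Z), ρ z ∈ U s → z ∈ V s) ∧
        (∀ (s : G) (z : Z), z ∈ V s⁻¹ → ρ (η s z) = θ s (ρ z)) ∧
        ∀ x : G → Bool, x 1 = true → ∃ z : Z, d (ρ z) x < δ :=
  partial_bernoulli_RFD_general hRF t d hd θ hθ U hU δ hδ
end

section
/- Let θ be a continuous partial action of a group G on a compact Hausdorff space X with open domains U_t, and let α be the dual partial action on C(X) with ideals C₀(U_t), α_t(f) = f ∘ θ_{t⁻¹}. Suppose (φ, v) is a covariant representation of (C(X), G, α) in M_d, i.e. φ : C(X) → M_d is a unital *-homomorphism, v : G → M_d is a partial *-representation, and v_t φ(f) v_t* = φ(α_t(f)) for all t ∈ G and f ∈ C₀(U_{t⁻¹}). Then there exist a finite set Z, a partial action η of G on Z with domains V_t, and a map ρ : Z → X such that φ(f) is the multiplication operator f ∘ ρ under an identification of the image φ(C(X)) with C(Z), and ρ is strictly equivariant: ρ(V_t) ⊆ U_t, ρ⁻¹(U_t) ⊆ V_t,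 and ρ(η_t(z)) = θ_t(ρ(z)) for all t ∈ G, z ∈ V_{t⁻¹}. -/
open scoped ContinuousMap

open ContinuousMap

open scoped Matrix.Norms.L2Operator CStarAlgebra in
theorem myPhiKerClosed {X : Type*} [TopologicalSpace X] [CompactSpace X] [T2Space X]
    {d : ℕ} (φ : C(X, ℂ) →⋆ₐ[ℂ] Matrix (Fin d) (Fin d) ℂ) :
    IsClosed ((RingHom.ker φ : Ideal C(X, ℂ)) : Set C(X, ℂ)) := by
  letI : CStarAlgebra (Matrix (Fin d) (Fin d) ℂ) := inferInstance
  have hc : Continuous φ := map_continuous φ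
  have h : ((RingHom.ker φ : Ideal C(X, ℂ)) : Set C(X, ℂ)) = φ ⁻¹' {0} := by
    ext f; simp [RingHom.mem_ker]
  rw [h]
  exact isClosed_singleton.preimage hc

theorem myPhiVanish {X : Type*} [TopologicalSpace X] [CompactSpace X] [T2Space X]
    {d : ℕ} (φ : C(X, ℂ) →⋆ₐ[ℂ] Matrix (Fin d) (Fin d) ℂ) (f : C(X, ℂ))
    (hf : ∀ x ∈ (setOfIdeal (RingHom.ker φ))ᶜ, f x = 0) : φ f = 0 := by
  have h : f ∈ idealOfSet ℂ (setOfIdeal (RingHom.ker φ)) := by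
    rw [mem_idealOfSet]; exact fun x hx => hf x hx
  rw [idealOfSet_ofIdeal_eq_closure, Ideal.closure_eq_of_isClosed _ (myPhiKerClosed φ)] at h
  exact h

theorem myExistsSep {X : Type*} [TopologicalSpace X] [CompactSpace X] [T2Space X]
    {A : Set X} (hA : A.Finite) {y : X} (hy : y ∉ A) :
    ∃ g : C(X, ℂ), g y = 1 ∧ (∀ x ∈ A, g x = 0) ∧ star g = g := by
  obtain ⟨g₀, h0, h1, -⟩ := exists_continuous_zero_one_of_isClosed hA.isClosed
    isClosed_singleton (Set.disjoint_singleton_right.mpr hy)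
  refine ⟨(⟨Complex.ofReal, Complex.continuous_ofReal⟩ : C(ℝ, ℂ)).comp g₀, ?_, ?_, ?_⟩
  · simp [h1 rfl]
  · intro x hx; simp [h0 hx]
  · ext x; simp [Complex.conj_ofReal]

theorem myExistsBump {X : Type*} [TopologicalSpace X] [CompactSpace X] [T2Space X]
    {N : Set X} (hN : IsOpen N) {y : X} (hy : y ∈ N) :
    ∃ (g : C(X, ℂ)) (N' : Set X), IsOpen N' ∧ y ∈ N' ∧ closure N' ⊆ N ∧
      g y = 1 ∧ (∀ x ∉ N', g x = 0) := by
  obtain ⟨N', hN'open, hyN', hclN'⟩ := normal_exists_closure_subset isClosed_singleton hN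
    (Set.singleton_subset_iff.mpr hy)
  obtain ⟨g₀, h0, h1, -⟩ := exists_continuous_zero_one_of_isClosed
    (isClosed_compl_iff.mpr hN'open) isClosed_singleton
    (Set.disjoint_singleton_right.mpr (fun h => h (hyN' rfl)))
  refine ⟨(⟨Complex.ofReal, Complex.continuous_ofReal⟩ : C(ℝ, ℂ)).comp g₀, N', hN'open, hyN' rfl,
    hclN', ?_, ?_⟩
  · simp [h1 rfl]
  · intro x hx; simp [h0 hx]


/-- Let `θ` be a continuous partial action of a group `G` on a compact Hausdorff space
`X` with open domains `U t`, and let `(φ, v)` be a covariant representation in `M_d` of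
the dual partial system on `C(X)`: `φ` is a unital *-homomorphism, `v` a partial
*-representation, and `v t * φ f * (v t)* = φ (α_t f)` whenever `f` is supported in
`U t⁻¹` (where `α_t f = f ∘ θ t⁻¹` on `U t` and `0` off `U t`). Then there are a finite
set `Z`, a partial action `η` of `G` on `Z` with domains `V t`, and a strictly
equivariant map `ρ : Z → X` such that, under an identification `ι` of `C(Z)` with the
image of `φ`, `φ f` is multiplication by `f ∘ ρ`. -/
theorem covariant_rep_gives_finite_partial_action {G X : Type*} [Group G]
    [TopologicalSpace X] [CompactSpace X] [T2Space X]
    (U : G → Set X) (θ : G → X → X) (hpa : IsPartialAction U θ)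
    (hopen : ∀ t : G, IsOpen (U t)) (hcont : ∀ t : G, ContinuousOn (θ t) (U t⁻¹))
    (d : ℕ) (φ : C(X, ℂ) →⋆ₐ[ℂ] Matrix (Fin d) (Fin d) ℂ)
    (v : G → Matrix (Fin d) (Fin d) ℂ)
    (hone : v 1 = 1) (hstar : ∀ t : G, v t⁻¹ = star (v t))
    (hrel : ∀ s t : G, v s⁻¹ * v s * v t = v s⁻¹ * v (s * t))
    (hcov : ∀ (t : G) (f g : C(X, ℂ)), (∀ x ∉ U t⁻¹, f x = 0) →
      (∀ x ∈ U t⁻¹, g (θ t x) = f x) → (∀ x ∉ U t, g x = 0) →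
      v t * φ f * star (v t) = φ g) :
    ∃ (Z : Type) (_ : Fintype Z) (V : G → Set Z) (η : G → Z → Z),
      IsPartialAction V η ∧
      ∃ ρ : Z → X,
        (∀ t : G, ρ '' V t ⊆ U t) ∧
        (∀ (t : G) (z : Z), ρ z ∈ U t → z ∈ V t) ∧
        (∀ (t : G) (z : Z), z ∈ V t⁻¹ → ρ (η t z) = θ t (ρ z)) ∧
        ∃ ι : (Z → ℂ) →⋆ₐ[ℂ] Matrix (Fin d) (Fin d) ℂ,
          Function.Injective ι ∧ ∀ f : C(X, ℂ), φ f = ι (fun z => f (ρ z)) := by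
  classical
  obtain ⟨hU1, hθ1, hmaps, hcomp⟩ := hpa
  set Kset : Set X := (ContinuousMap.setOfIdeal (RingHom.ker φ))ᶜ with hKsetdef
  have h1 : ∀ f : C(X, ℂ), (∀ x ∈ Kset, f x = 0) → φ f = 0 := fun f hf => myPhiVanish φ f hf
  have h2 : ∀ f : C(X, ℂ), φ f = 0 → ∀ x ∈ Kset, f x = 0 := fun f hf x hx =>
    ContinuousMap.notMem_setOfIdeal.mp hx (RingHom.mem_ker.mpr hf)
  have hφeq : ∀ f₁ f₂ : C(X, ℂ), (∀ x ∈ Kset, f₁ x = f₂ x) → φ f₁ = φ f₂ := by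
    intro f₁ f₂ h
    have h0 : φ (f₁ - f₂) = 0 := h1 _ (fun x hx => by simp [h x hx])
    rw [map_sub] at h0
    exact sub_eq_zero.mp h0
  -- cancellation lemmas for θ
  have hcancel1 : ∀ (t : G) (x : X), x ∈ U t⁻¹ → θ t⁻¹ (θ t x) = x := by
    intro t x hx
    have h3 : θ t x ∈ U (t⁻¹)⁻¹ := by rw [inv_inv]; exact hmaps t x hx
    have h4 := (hcomp t⁻¹ t x hx h3).2
    rw [h4, inv_mul_cancel, hθ1]
  have hcancel2 : ∀ (t : G) (x : X), x ∈ U t → θ t (θ t⁻¹ x) = x := by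
    intro t x hx
    have hx' : x ∈ U (t⁻¹)⁻¹ := by rwa [inv_inv]
    have h4 : θ t⁻¹ x ∈ U t⁻¹ := hmaps t⁻¹ x hx'
    have h5 := (hcomp t t⁻¹ x hx' h4).2
    rw [h5, mul_inv_cancel, hθ1]
  -- invariance of Kset
  have hinv : ∀ (t : G) (x : X), x ∈ Kset → x ∈ U t⁻¹ → θ t x ∈ Kset := by
    intro t x hxK hxU
    by_contra hyK
    have hyO : θ t x ∈ ContinuousMap.setOfIdeal (RingHom.ker φ) := by
      simpa [hKsetdef] using hyK
    have hyU : θ t x ∈ U t := hmaps t x hxU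
    have hNopen : IsOpen (ContinuousMap.setOfIdeal (RingHom.ker φ) ∩ U t) :=
      (ContinuousMap.setOfIdeal_open _).inter (hopen t)
    obtain ⟨g, N', hN'open, hyN', hclN', hg1, hg0⟩ := myExistsBump hNopen ⟨hyO, hyU⟩
    have hclU : closure N' ⊆ U t := fun z hz => (hclN' hz).2
    have hclO : ∀ z ∈ closure N', z ∉ Kset := fun z hz => by
      simp only [hKsetdef, Set.mem_compl_iff, not_not]
      exact (hclN' hz).1
    set D : Set X := θ t⁻¹ '' closure N' with hDdef
    have hDcomp : IsCompact D := by
      refine IsCompact.image_of_continuousOn isClosed_closure.isCompact ((hcont t⁻¹).mono ?_)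
      rw [inv_inv]; exact hclU
    have hDU : D ⊆ U t⁻¹ := by
      rintro _ ⟨z, hz, rfl⟩
      exact hmaps t⁻¹ z (by rw [inv_inv]; exact hclU hz)
    set f0 : X → ℂ := fun w => if w ∈ U t⁻¹ then g (θ t w) else 0 with hf0def
    have hf0D : ∀ z ∉ D, f0 z = 0 := by
      intro z hz
      by_cases hzU : z ∈ U t⁻¹
      · simp only [hf0def, if_pos hzU]
        by_contra hne
        have hNin : θ t z ∈ N' := by
          by_contra h'; exact hne (hg0 _ h')
        exact hz ⟨θ t z, subset_closure hNin, hcancel1 t z hzU⟩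
      · simp [hf0def, hzU]
    have hf0cont : Continuous f0 := by
      rw [continuous_iff_continuousAt]
      intro z
      by_cases hzU : z ∈ U t⁻¹
      · have hco : ContinuousOn (fun w => g (θ t w)) (U t⁻¹) :=
          (map_continuous g).comp_continuousOn (hcont t)
        have hmem := (hopen t⁻¹).mem_nhds hzU
        refine (hco.continuousAt hmem).congr ?_
        filter_upwards [hmem] with w hw
        simp [hf0def, hw]
      · have hzD : z ∉ D := fun h => hzU (hDU h)
        have hDopen : IsOpen Dᶜ := hDcomp.isClosed.isOpen_compl
        have hcz : ContinuousAt (fun _ : X => (0 : ℂ)) z := continuousAt_const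
        refine hcz.congr ?_
        filter_upwards [hDopen.mem_nhds hzD] with w hw
        exact (hf0D w hw).symm
    set f : C(X, ℂ) := ⟨f0, hf0cont⟩ with hfdef
    have hφg : φ g = 0 := h1 g (fun w hw => hg0 w (fun h => hclO w (subset_closure h) hw))
    have E2 : v t⁻¹ * φ g * star (v t⁻¹) = φ f := by
      refine hcov t⁻¹ g f ?_ ?_ (fun w hw => if_neg hw)
      · intro w hw; rw [inv_inv] at hw
        exact hg0 w (fun h => hw (hclU (subset_closure h)))
      · intro w hw; rw [inv_inv] at hw
        have h4 : θ t⁻¹ w ∈ U t⁻¹ := hmaps t⁻¹ w (by rwa [inv_inv])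
        show f0 (θ t⁻¹ w) = g w
        rw [hf0def]; simp only [if_pos h4, hcancel2 t w hw]
    have hφf : φ f = 0 := by rw [← E2, hφg, mul_zero, zero_mul]
    have hfx : f0 x = 0 := h2 f hφf x hxK
    rw [hf0def] at hfx
    simp only [if_pos hxU] at hfx
    rw [hg1] at hfx
    exact one_ne_zero hfx
  -- finiteness of Kset
  have hfin : Kset.Finite := by
    by_contra hinf
    rw [← Set.not_infinite, not_not] at hinf
    obtain ⟨s, hsub, hsfin, hcard⟩ := hinf.exists_subset_ncard_eq
      (Module.finrank ℂ (Matrix (Fin d) (Fin d) ℂ) + 1)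
    haveI : Fintype ↥s := hsfin.fintype
    have hsep : ∀ i : ↥s, ∃ g : C(X, ℂ), g i = 1 ∧ ∀ j : ↥s, j ≠ i → g j = 0 := by
      intro i
      have hA : (s \ {(i : X)}).Finite := hsfin.diff
      have hy : (i : X) ∉ s \ {(i : X)} := by simp
      obtain ⟨g, hg1, hg0, -⟩ := myExistsSep hA hy
      refine ⟨g, hg1, fun j hj => hg0 j ⟨j.2, by simpa [Subtype.ext_iff] using hj⟩⟩
    choose F hF1 hF0 using hsep
    have hli : LinearIndependent ℂ (fun i : ↥s => φ (F i)) := by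
      rw [Fintype.linearIndependent_iff]
      intro c hc i
      have hz : φ (∑ j, c j • F j) = 0 := by
        rw [map_sum]; simpa [map_smul] using hc
      have hev := h2 _ hz (i : X) (hsub i.2)
      simp only [ContinuousMap.coe_sum, Finset.sum_apply, ContinuousMap.coe_smul,
        Pi.smul_apply, smul_eq_mul] at hev
      rw [Finset.sum_eq_single i (fun j _ hji => by rw [hF0 j i (Ne.symm hji), mul_zero])
        (fun h => absurd (Finset.mem_univ i) h)] at hev
      rwa [hF1 i, mul_one] at hev
    have hle := hli.fintype_card_le_finrank
    rw [← Nat.card_eq_fintype_card, Nat.card_coe_set_eq, hcard] at hle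
    omega
  haveI hKft : Fintype ↥Kset := hfin.fintype
  set nn := Fintype.card ↥Kset with hnn
  set eqv : ↥Kset ≃ Fin nn := Fintype.equivFin ↥Kset with heqv
  set ρ : Fin nn → X := fun i => ((eqv.symm i : ↥Kset) : X) with hρ
  have hρK : ∀ i, ρ i ∈ Kset := fun i => (eqv.symm i).2
  have hρval : ∀ (y : X) (hy : y ∈ Kset), ρ (eqv ⟨y, hy⟩) = y := by
    intro y hy; simp [hρ]
  have hρinj : Function.Injective ρ := by
    intro i j h
    exact eqv.symm.injective (Subtype.coe_injective h)
  have hρsurj : ∀ x ∈ Kset, ∃ i, ρ i = x := fun x hx => ⟨eqv ⟨x, hx⟩, hρval x hx⟩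
  set V : G → Set (Fin nn) := fun t => {i | ρ i ∈ U t} with hV
  set η : G → Fin nn → Fin nn := fun t i =>
    if h : ρ i ∈ U t⁻¹ then eqv ⟨θ t (ρ i), hinv t (ρ i) (hρK i) h⟩ else i with hη
  have hρη : ∀ (t : G) (i : Fin nn), ρ i ∈ U t⁻¹ → ρ (η t i) = θ t (ρ i) := by
    intro t i h
    simp only [hη, dif_pos h]
    exact hρval _ _
  refine ⟨Fin nn, inferInstance, V, η, ⟨?_, ?_, ?_, ?_⟩, ρ, ?_, ?_, ?_, ?_⟩
  · ext i; simp [hV, hU1]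
  · intro i
    have h : ρ i ∈ U (1 : G)⁻¹ := by rw [inv_one, hU1]; trivial
    simp only [hη, dif_pos h]
    have he : (⟨θ 1 (ρ i), hinv 1 (ρ i) (hρK i) h⟩ : ↥Kset) = eqv.symm i :=
      Subtype.ext (hθ1 (ρ i))
    rw [he, Equiv.apply_symm_apply]
  · intro t i hi
    show ρ (η t i) ∈ U t
    rw [hρη t i hi]
    exact hmaps t (ρ i) hi
  · intro s t i hi hsi
    have hti : ρ i ∈ U t⁻¹ := hi
    have hsi' : ρ (η t i) ∈ U s⁻¹ := hsi
    obtain ⟨hm, hce⟩ := hcomp s t (ρ i) hti (by rw [← hρη t i hti]; exact hsi')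
    refine ⟨hm, hρinj ?_⟩
    rw [hρη s (η t i) hsi', hρη t i hti, hρη (s * t) i hm, hce]
  · rintro t _ ⟨i, hi, rfl⟩; exact hi
  · intro t i h; exact h
  · intro t i h; exact hρη t i h
  -- construction of ι
  have hsepE : ∀ i : Fin nn, ∃ g : C(X, ℂ),
      g (ρ i) = 1 ∧ (∀ j : Fin nn, j ≠ i → g (ρ j) = 0) ∧ star g = g := by
    intro i
    have hA : (ρ '' {j | j ≠ i}).Finite := (Set.toFinite _).image ρ
    have hy : ρ i ∉ ρ '' {j | j ≠ i} := by
      rintro ⟨j, hj, hji⟩; exact hj (hρinj hji)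
    obtain ⟨g, hg1, hg0, hgs⟩ := myExistsSep hA hy
    exact ⟨g, hg1, fun j hj => hg0 _ ⟨j, hj, rfl⟩, hgs⟩
  choose E hE1 hE0 hEs using hsepE
  have hcalc : ∀ (g : Fin nn → ℂ) (j : Fin nn), (∑ i, g i • E i) (ρ j) = g j := by
    intro g j
    simp only [ContinuousMap.coe_sum, Finset.sum_apply, ContinuousMap.coe_smul,
      Pi.smul_apply, smul_eq_mul]
    rw [Finset.sum_eq_single j (fun b _ hbj => by rw [hE0 b j (Ne.symm hbj), mul_zero])
      (fun h => absurd (Finset.mem_univ j) h)]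
    rw [hE1 j, mul_one]
  have hKeq : ∀ f₁ f₂ : C(X, ℂ), (∀ j, f₁ (ρ j) = f₂ (ρ j)) → φ f₁ = φ f₂ := by
    intro f₁ f₂ h
    refine hφeq f₁ f₂ (fun x hx => ?_)
    obtain ⟨j, rfl⟩ := hρsurj x hx
    exact h j
  have hTone : φ (∑ i, E i) = 1 := by
    rw [show (1 : Matrix (Fin d) (Fin d) ℂ) = φ 1 from (map_one φ).symm]
    refine hKeq _ _ (fun j => ?_)
    have := hcalc (fun _ => (1 : ℂ)) j
    simp only [one_smul] at this
    rw [this]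
    simp
  refine ⟨{ toFun := fun g => φ (∑ i, g i • E i)
            map_one' := ?_
            map_mul' := ?_
            map_zero' := ?_
            map_add' := ?_
            commutes' := ?_
            map_star' := ?_ }, ?_, ?_⟩
  · simp only [Pi.one_apply, one_smul]
    exact hTone
  · intro g h
    rw [← map_mul]
    refine hKeq _ _ (fun j => ?_)
    rw [hcalc, ContinuousMap.mul_apply, hcalc, hcalc]
    rfl
  · simp only [Pi.zero_apply, zero_smul, Finset.sum_const_zero, map_zero]
  · intro g h
    rw [← map_add]
    congr 1
    simp only [Pi.add_apply, add_smul, Finset.sum_add_distrib]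
  · intro c
    have hc : ∀ i : Fin nn, (algebraMap ℂ (Fin nn → ℂ) c) i • E i = c • E i := fun i => rfl
    simp only [hc]
    rw [← Finset.smul_sum, map_smul, hTone, Algebra.algebraMap_eq_smul_one]
  · intro g
    rw [← map_star]
    refine congrArg φ (ContinuousMap.ext fun x => ?_)
    have hEx : ∀ i, star (E i x) = E i x := fun i => by
      have h := congrArg (fun f : C(X, ℂ) => f x) (hEs i)
      simpa using h
    simp only [ContinuousMap.star_apply, ContinuousMap.coe_sum, Finset.sum_apply,
      ContinuousMap.coe_smul, Pi.smul_apply, smul_eq_mul, star_sum, star_mul', Pi.star_apply]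
    exact Finset.sum_congr rfl fun i _ => by rw [hEx i]
  · rw [injective_iff_map_eq_zero]
    intro g hg
    have hg' : φ (∑ i, g i • E i) = 0 := hg
    funext j
    have := h2 _ hg' (ρ j) (hρK j)
    rw [hcalc] at this
    exact this
  · intro f
    show φ f = φ (∑ i, f (ρ i) • E i)
    refine hKeq _ _ (fun j => ?_)
    rw [hcalc]
end
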